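/- arXiv:math/9806090 — 3 statements merged into one kernel-verified Lean document; each statement's English description precedes it below -/
import Mathlib

section
/- Let N, K be positive integers with d = gcd(N,K) even, N' = N/d and K' = K/d odd, and let d = αβ with gcd(α,2K') = 1, gcd(β,N') = 1, and gcd(α,β) = 1. Let s ∈ ℂ be a primitive 2(N+K)-th root of unity. Then there exists a ∈ ℂ such that (a^N · s)^α = 1 and (a^K · s^{-1})^β = -1. -/
private lemma key1 (n' k' al be u v c : ℤ)
    (hb : n' * al * u + k' * be * v = 1) (hc : al * n' + 1 = 2 * c) :
    ((v * (al * be * (n' + k')) + (v * be - u * al)) * (al * be * n') + al * be) * al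
      = 2 * (al * be * n' + al * be * k') * (al * be) * (v * c) := by
  linear_combination (v * (al * be * (n' + k')) * al * be) * hc - (al * (al * be)) * hb

private lemma key2 (n' k' al be u v b' c'' : ℤ)
    (hb : n' * al * u + k' * be * v = 1) (hbe : be = 2 * b') (hu : u = 2 * c'' + 1) :
    ((v * (al * be * (n' + k')) + (v * be - u * al)) * (al * be * k') - al * be) * be
      = (al * be * n' + al * be * k') * (al * be)
        + 2 * (al * be * n' + al * be * k') * (al * be) * (b' * k' * v - c'' - 1) := by
  linear_combination (be * (al * be)) * hb
    + ((al * be * (n' + k')) * (al * be) * v * k') * hbe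
    - ((al * be * (n' + k')) * (al * be)) * hu

theorem stmt_2 (N K : ℕ) (hN : 0 < N) (hK : 0 < K)
    (d : ℕ) (hd : d = Nat.gcd N K)
    (hdeven : Even d) (hN' : Odd (N / d)) (hK' : Odd (K / d))
    (α β : ℕ) (hαβ : d = α * β)
    (hα : Nat.gcd α (2 * (K / d)) = 1) (hβ : Nat.gcd β (N / d) = 1)
    (hcop : Nat.gcd α β = 1)
    (s : ℂ) (hs : IsPrimitiveRoot s (2 * (N + K))) :
    ∃ a : ℂ, (a ^ N * s) ^ α = 1 ∧ (a ^ K * s⁻¹) ^ β = -1 := by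
  have hdpos : 0 < d := hd ▸ Nat.gcd_pos_of_pos_left K hN
  have hdN : d ∣ N := hd ▸ Nat.gcd_dvd_left N K
  have hdK : d ∣ K := hd ▸ Nat.gcd_dvd_right N K
  have hNeq : N = d * (N / d) := (Nat.mul_div_cancel' hdN).symm
  have hKeq : K = d * (K / d) := (Nat.mul_div_cancel' hdK).symm
  -- coprimality facts
  have cN'K' : Nat.Coprime (N / d) (K / d) := by
    rw [hd]; exact Nat.coprime_div_gcd_div_gcd (hd ▸ hdpos)
  have cαK' : Nat.Coprime α (K / d) :=
    Nat.Coprime.coprime_dvd_right (dvd_mul_left (K / d) 2) hα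
  have cα2 : Nat.Coprime α 2 :=
    Nat.Coprime.coprime_dvd_right (dvd_mul_right 2 (K / d)) hα
  have hαodd : Odd α := Nat.coprime_two_right.mp cα2
  have hβeven : Even β := by
    rcases Nat.even_mul.mp (hαβ ▸ hdeven) with h | h
    · exact absurd h (Nat.not_even_iff_odd.mpr hαodd)
    · exact h
  have cop : Nat.Coprime (N / d * α) (K / d * β) :=
    Nat.Coprime.mul (cN'K'.mul_right (Nat.Coprime.symm hβ)) (cαK'.mul_right hcop)
  -- integer versions
  set n' : ℤ := ((N / d : ℕ) : ℤ) with hn'def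
  set k' : ℤ := ((K / d : ℕ) : ℤ) with hk'def
  set al : ℤ := (α : ℤ) with haldef
  set be : ℤ := (β : ℤ) with hbedef
  have hn'odd : Odd n' := by rw [hn'def]; exact_mod_cast hN'
  have halodd : Odd al := by rw [haldef]; exact_mod_cast hαodd
  have hbeeven : Even be := by rw [hbedef]; exact_mod_cast hβeven
  have hdz : (d : ℤ) = al * be := by rw [haldef, hbedef]; exact_mod_cast hαβ
  have hNz : (N : ℤ) = al * be * n' := by rw [← hdz, hn'def]; exact_mod_cast hNeq
  have hKz : (K : ℤ) = al * be * k' := by rw [← hdz, hk'def]; exact_mod_cast hKeq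
  -- Bezout
  have copZ : Int.gcd (n' * al) (k' * be) = 1 := by
    rw [hn'def, hk'def, haldef, hbedef]
    have : ((N / d * α : ℕ) : ℤ).gcd ((K / d * β : ℕ) : ℤ) = 1 := by
      rw [Int.gcd_natCast_natCast]; exact cop
    simpa using this
  set u : ℤ := Int.gcdA (n' * al) (k' * be) with hudef
  set v : ℤ := Int.gcdB (n' * al) (k' * be) with hvdef
  have hb : n' * al * u + k' * be * v = 1 := by
    have := Int.gcd_eq_gcd_ab (n' * al) (k' * be)
    rw [copZ] at this
    exact_mod_cast this.symm
  -- u is odd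
  have huodd : Odd u := by
    have hev : Even (k' * be * v) := (hbeeven.mul_left k').mul_right v
    have hodd : Odd (n' * al * u) := by
      have h1 : n' * al * u = 1 - k' * be * v := by linarith
      rw [h1]
      exact (odd_one).sub_even hev
    exact (Int.odd_mul.mp hodd).2
  obtain ⟨c'', hu⟩ := huodd
  have hal1 : Odd (al * n') := halodd.mul hn'odd
  obtain ⟨c0, hc0⟩ := hal1
  have hc : al * n' + 1 = 2 * c0 + 2 := by omega
  obtain ⟨b', hb'⟩ := hbeeven
  have hbe : be = 2 * b' := by omega
  -- pick a root ζ with ζ^d = s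
  obtain ⟨ζ, hζ⟩ := IsAlgClosed.exists_pow_nat_eq s hdpos
  have hs0 : s ≠ 0 := hs.ne_zero (by positivity)
  have hζ0 : ζ ≠ 0 := by
    intro h
    exact hs0 (by rw [← hζ, h, zero_pow hdpos.ne'])
  have hζd : ζ ^ (d : ℤ) = s := by rw [zpow_natCast]; exact hζ
  -- key powers of ζ
  have hfull : ζ ^ ((2 * (N + K) * d : ℕ) : ℤ) = 1 := by
    rw [zpow_natCast, mul_comm (2 * (N + K)) d, pow_mul, hζ, hs.pow_eq_one]
  have hhalf : ζ ^ (((N + K) * d : ℕ) : ℤ) = -1 := by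
    have hm1 : s ^ (N + K) = -1 := by
      have h2 : s ^ (N + K) * s ^ (N + K) = 1 := by
        rw [← pow_add, ← two_mul, hs.pow_eq_one]
      rcases mul_self_eq_one_iff.mp h2 with h | h
      · exact absurd h (hs.pow_ne_one_of_pos_of_lt (by positivity) (by omega))
      · exact h
    rw [zpow_natCast, mul_comm (N + K) d, pow_mul, hζ, hm1]
  set t : ℤ := v * (al * be * (n' + k')) + (v * be - u * al) with htdef
  refine ⟨ζ ^ t, ?_, ?_⟩
  · -- first condition
    have hrw : (ζ ^ t) ^ N * s = ζ ^ (t * N + d) := by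
      rw [← zpow_natCast (ζ ^ t) N, ← zpow_mul, ← hζd, ← zpow_add₀ hζ0]
    rw [hrw, ← zpow_natCast (ζ ^ (t * N + d)) α, ← zpow_mul]
    have e1 : (t * (N : ℤ) + (d : ℤ)) * (α : ℤ)
        = ((2 * (N + K) * d : ℕ) : ℤ) * (v * (c0 + 1)) := by
      have hcast : ((2 * (N + K) * d : ℕ) : ℤ) = 2 * ((N : ℤ) + (K : ℤ)) * (d : ℤ) := by
        push_cast; ring
      rw [hcast, hNz, hKz, hdz, ← haldef, htdef]
      have := key1 n' k' al be u v (c0 + 1) hb (by omega)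
      linear_combination this
    rw [e1, zpow_mul, hfull, one_zpow]
  · -- second condition
    have hrw : (ζ ^ t) ^ K * s⁻¹ = ζ ^ (t * K - d) := by
      rw [← zpow_natCast (ζ ^ t) K, ← zpow_mul, ← hζd, ← zpow_neg, ← zpow_add₀ hζ0,
        sub_eq_add_neg]
    rw [hrw, ← zpow_natCast (ζ ^ (t * K - d)) β, ← zpow_mul]
    have e2 : (t * (K : ℤ) - (d : ℤ)) * (β : ℤ)
        = (((N + K) * d : ℕ) : ℤ)
          + ((2 * (N + K) * d : ℕ) : ℤ) * (b' * k' * v - c'' - 1) := by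
      have hcast1 : (((N + K) * d : ℕ) : ℤ) = ((N : ℤ) + (K : ℤ)) * (d : ℤ) := by
        push_cast; ring
      have hcast2 : ((2 * (N + K) * d : ℕ) : ℤ) = 2 * ((N : ℤ) + (K : ℤ)) * (d : ℤ) := by
        push_cast; ring
      rw [hcast1, hcast2, hNz, hKz, hdz, ← hbedef, htdef]
      have := key2 n' k' al be u v b' c'' hb hbe hu
      linear_combination this
    rw [e2, zpow_add₀ hζ0, hhalf, zpow_mul, hfull, one_zpow, mul_one]
end

section
/- Let N ≥ 2, K ≥ 1, and let s ∈ ℂ be a primitive 2(N+K)-th root of unity. For a Young diagram λ with at most N-1 rows and first row λ₁ ≤ K, define ⟨λ⟩ = Π_{c ∈ λ} [N + cn(c)]/[hl(c)], where [m] = (s^m - s^{-m})/(s - s^{-1}). Then every factor in this product is defined (no denominator vanishes) and ⟨λ⟩ ≠ 0. -/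
lemma aux1 {n : ℕ} {s : ℂ} (hs : IsPrimitiveRoot s (2 * n)) {m : ℤ}
    (h1 : 1 ≤ m) (h2 : m < n) : s ^ m - s ^ (-m) ≠ 0 := by
  have hs0 : s ≠ 0 := hs.ne_zero (by omega)
  intro h
  have heq := sub_eq_zero.mp h
  have h2m : s ^ (2 * m) = 1 := by
    calc s ^ (2 * m) = s ^ m * s ^ m := by rw [two_mul, zpow_add₀ hs0]
    _ = s ^ m * s ^ (-m) := by rw [heq]
    _ = 1 := by rw [← zpow_add₀ hs0]; simp
  have hnat : s ^ ((2 * m).toNat) = 1 := by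
    rw [← zpow_natCast, Int.toNat_of_nonneg (by omega)]; exact h2m
  exact hs.pow_ne_one_of_pos_of_lt (by omega) (by omega) hnat

theorem stmt_9 (N K : ℕ) (hN : 2 ≤ N) (hK : 1 ≤ K)
    (s : ℂ) (hs : IsPrimitiveRoot s (2 * (N + K)))
    (μ : YoungDiagram) (hrows : μ.colLen 0 ≤ N - 1) (hcols : μ.rowLen 0 ≤ K)
    (qint : ℤ → ℂ) (hqint : ∀ m : ℤ, qint m = (s ^ m - s ^ (-m)) / (s - s⁻¹))
    (hl cn : ℕ × ℕ → ℤ)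
    (hhl : ∀ c, hl c = (μ.rowLen c.1 : ℤ) + (μ.colLen c.2 : ℤ) - c.1 - c.2 - 1)
    (hcn : ∀ c, cn c = (c.2 : ℤ) - c.1) :
    (∀ c ∈ μ.cells, qint (hl c) ≠ 0 ∧ s - s⁻¹ ≠ 0) ∧
    ∏ c ∈ μ.cells, qint ((N : ℤ) + cn c) / qint (hl c) ≠ 0 := by
  have hne : s - s⁻¹ ≠ 0 := by
    have h := aux1 hs (m := 1) le_rfl (by push_cast; omega)
    simpa using h
  have key : ∀ c ∈ μ.cells, qint (hl c) ≠ 0 ∧ qint ((N : ℤ) + cn c) ≠ 0 := by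
    rintro ⟨i, j⟩ hc
    rw [YoungDiagram.mem_cells] at hc
    have hj : j < μ.rowLen i := YoungDiagram.mem_iff_lt_rowLen.mp hc
    have hi : i < μ.colLen j := YoungDiagram.mem_iff_lt_colLen.mp hc
    have hrK : μ.rowLen i ≤ K := le_trans (μ.rowLen_anti 0 i (Nat.zero_le _)) hcols
    have hcN : μ.colLen j ≤ N - 1 := le_trans (μ.colLen_anti 0 j (Nat.zero_le _)) hrows
    constructor
    · rw [hqint, hhl]
      exact div_ne_zero (aux1 hs (by simp; omega) (by simp; omega)) hne
    · rw [hqint, hcn]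
      exact div_ne_zero (aux1 hs (by simp; omega) (by simp; omega)) hne
  refine ⟨fun c hc => ⟨(key c hc).1, hne⟩, ?_⟩
  rw [Finset.prod_ne_zero_iff]
  intro c hc
  exact div_ne_zero (key c hc).2 (key c hc).1
end

section
/- Let α be an odd positive integer, β an even positive integer with gcd(α,β) = 1, and set d = αβ. Let ζ ∈ ℂ be a primitive α-th root of unity and ξ ∈ ℂ a primitive 2β-th root of unity. Then for every j ∈ {0, 1, ..., d-1}: (1/d)·(Σ_{k=0}^{α-1} ζ^{2kj})·(Σ_{l=0}^{β-1} (-1)^l ξ^{2lj}) equals 1 if j = d/2 and 0 otherwise. -/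
theorem stmt_16 (α β : ℕ) (hα : Odd α) (hα0 : 0 < α) (hβ : Even β) (hβ0 : 0 < β)
    (hcop : Nat.gcd α β = 1) (d : ℕ) (hd : d = α * β)
    (ζ ξ : ℂ) (hζ : IsPrimitiveRoot ζ α) (hξ : IsPrimitiveRoot ξ (2 * β))
    (j : ℕ) (hj : j < d) :
    (1 / (d : ℂ)) * (∑ k ∈ Finset.range α, ζ ^ (2 * k * j)) *
        (∑ l ∈ Finset.range β, (-1 : ℂ) ^ l * ξ ^ (2 * l * j)) =
      if j = d / 2 then 1 else 0 := by
  obtain ⟨b, hb⟩ := hβ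
  have hβ2b : β = 2 * b := by omega
  have hb0 : 0 < b := by omega
  have hd0 : 0 < d := by rw [hd]; positivity
  have hca2 : Nat.Coprime α 2 :=
    ((Nat.prime_two.coprime_iff_not_dvd).mpr (by
      rcases hα with ⟨a, rfl⟩; omega)).symm
  have hcab : Nat.Coprime α b :=
    Nat.Coprime.coprime_dvd_right ⟨2, by omega⟩ hcop
  -- ξ ^ β = -1
  have hxb : ξ ^ β = -1 := by
    have h2 : IsPrimitiveRoot (ξ ^ β) 2 := hξ.pow (by positivity) (by ring)
    exact h2.eq_neg_one_of_two_right
  -- first sum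
  have hS1 : (∑ k ∈ Finset.range α, ζ ^ (2 * k * j))
      = if α ∣ j then (α : ℂ) else 0 := by
    have hterm : ∀ k ∈ Finset.range α, ζ ^ (2 * k * j) = (ζ ^ (2 * j)) ^ k := by
      intro k _
      rw [show 2 * k * j = 2 * j * k from by ring]
      exact pow_mul ζ (2 * j) k
    rw [Finset.sum_congr rfl hterm]
    by_cases h : α ∣ j
    · have h1 : ζ ^ (2 * j) = 1 := (hζ.pow_eq_one_iff_dvd _).mpr (h.mul_left 2)
      simp [h1, h]
    · have hne : ζ ^ (2 * j) ≠ 1 := fun h1 =>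
        h (hca2.dvd_of_dvd_mul_left ((hζ.pow_eq_one_iff_dvd _).mp h1))
      rw [geom_sum_eq hne]
      have hz : (ζ ^ (2 * j)) ^ α = 1 := by
        rw [← pow_mul, mul_comm, pow_mul, hζ.pow_eq_one, one_pow]
      rw [hz]; simp [h]
  -- second sum
  have hS2 : (∑ l ∈ Finset.range β, (-1 : ℂ) ^ l * ξ ^ (2 * l * j))
      = if ξ ^ (2 * j) = -1 then (β : ℂ) else 0 := by
    have hterm : ∀ l ∈ Finset.range β,
        (-1 : ℂ) ^ l * ξ ^ (2 * l * j) = (-(ξ ^ (2 * j))) ^ l := by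
      intro l _
      rw [show 2 * l * j = 2 * j * l from by ring, neg_pow (ξ ^ (2 * j)) l, ← pow_mul]
    rw [Finset.sum_congr rfl hterm]
    by_cases h : ξ ^ (2 * j) = -1
    · have h1 : -(ξ ^ (2 * j)) = 1 := by rw [h]; ring
      simp [h1, h]
    · have hne : -(ξ ^ (2 * j)) ≠ 1 := by
        intro h1; exact h (by linear_combination -h1)
      rw [geom_sum_eq hne]
      have hz : (-(ξ ^ (2 * j))) ^ β = 1 := by
        rw [neg_pow (ξ ^ (2 * j)) β, ← pow_mul, Even.neg_one_pow ⟨b, hb⟩, one_mul,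
          mul_comm 2 j, mul_assoc, mul_comm j (2 * β), pow_mul, hξ.pow_eq_one, one_pow]
      rw [hz]; simp [h]
  -- characterize the condition ξ^(2j) = -1
  have hxiff : ξ ^ (2 * j) = -1 ↔ 2 * β ∣ 2 * j + β := by
    rw [← hξ.pow_eq_one_iff_dvd, pow_add, hxb]
    constructor
    · intro h; rw [h]; ring
    · intro h
      have h2 : ξ ^ (2 * j) * -1 * -1 = 1 * -1 := by rw [h]
      simpa using h2
  -- main arithmetic equivalence
  have hd2 : d / 2 = α * b := by
    rw [hd, hβ2b, show α * (2 * b) = 2 * (α * b) from by ring,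
      Nat.mul_div_cancel_left _ two_pos]
  have hmain : (α ∣ j ∧ 2 * β ∣ 2 * j + β) ↔ j = d / 2 := by
    constructor
    · rintro ⟨haj, hdvd⟩
      obtain ⟨m, hm⟩ := hdvd
      have hjb : j + b = 2 * b * m := by
        have h2 : 2 * (j + b) = 2 * (2 * b * m) := by
          calc 2 * (j + b) = 2 * j + β := by omega
          _ = 2 * β * m := hm
          _ = 2 * (2 * b * m) := by rw [hβ2b]; ring
        exact Nat.eq_of_mul_eq_mul_left two_pos h2
      have hm0 : 1 ≤ m := by
        rcases Nat.eq_zero_or_pos m with rfl | h'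
        · simp at hjb; omega
        · exact h'
      set m1 := 2 * m - 1 with hm1def
      have hj2 : j = b * m1 := by
        have h3 : j + b = b * m1 + b := by
          calc j + b = 2 * b * m := hjb
          _ = b * (2 * m) := by ring
          _ = b * (m1 + 1) := by rw [show m1 + 1 = 2 * m from by omega]
          _ = b * m1 + b := by ring
        exact Nat.add_right_cancel h3
      have ham1 : α ∣ m1 := hcab.dvd_of_dvd_mul_left (hj2 ▸ haj)
      obtain ⟨t, ht⟩ := ham1
      have ht0 : t ≠ 0 := by rintro rfl; simp at ht; omega
      have ht1 : t = 1 := by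
        by_contra h2
        have h4 : 2 ≤ t := by omega
        have hge : b * (α * 2) ≤ j := by
          rw [hj2, ht]
          exact Nat.mul_le_mul_left b (Nat.mul_le_mul_left α h4)
        rw [hd, hβ2b, show α * (2 * b) = b * (α * 2) from by ring] at hj
        exact Nat.lt_irrefl j (lt_of_lt_of_le hj hge)
      rw [hd2, hj2, ht, ht1]; ring
    · rintro rfl
      rw [hd2]
      refine ⟨Dvd.intro b rfl, ?_⟩
      obtain ⟨a, ha⟩ := hα
      exact ⟨a + 1, by rw [hβ2b, ha]; ring⟩
  -- conclude
  rw [hS1, hS2]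
  by_cases hjd : j = d / 2
  · obtain ⟨h1, h2⟩ := hmain.mpr hjd
    rw [if_pos hjd, if_pos h1, if_pos (hxiff.mpr h2)]
    have hdne : (d : ℂ) ≠ 0 := Nat.cast_ne_zero.mpr hd0.ne'
    field_simp
    rw [hd]; push_cast; ring
  · rw [if_neg hjd]
    by_cases h1 : α ∣ j
    · have h2 : ¬ (2 * β ∣ 2 * j + β) := fun h2 => hjd (hmain.mp ⟨h1, h2⟩)
      rw [if_neg (fun hx => h2 (hxiff.mp hx))]
      ring
    · rw [if_neg h1]; ring
end
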